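/- arXiv:1709.00313 — 6 statements merged into one kernel-verified Lean document; each statement's English description precedes it below -/
import Mathlib

section
/- Let P = (X, ≺) be a finite poset, k a positive integer, and ε a real number with 0 < ε < 1/(2|X|). If P has a [1,k]-interval representation, then the weighted digraph G_{P,k} contains no negative cycle. -/
/-- A weighted digraph on vertex set `V`: an adjacency (arc) relation and a
real weight on each (potential) arc. -/
structure WeightedDigraph (V : Type*) where
  Adj : V → V → Prop
  w : V → V → ℝ

/-- A potential function: `p y - p x ≤ w x y` for every arc `(x, y)`. -/
def WeightedDigraph.IsPotential {V : Type*} (G : WeightedDigraph V) (p : V → ℝ) : Prop :=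
  ∀ u v, G.Adj u v → p v - p u ≤ G.w u v

/-- Cyclic successor of an index. -/
def finNext {n : ℕ} (i : Fin n) : Fin n := ⟨(i + 1) % n, Nat.mod_lt _ i.pos⟩

/-- A cycle: a nonempty list of distinct vertices, with an arc from each
vertex to the (cyclically) next one. -/
def WeightedDigraph.IsCycle {V : Type*} (G : WeightedDigraph V) (c : List V) : Prop :=
  c ≠ [] ∧ c.Nodup ∧ ∀ i : Fin c.length, G.Adj (c.get i) (c.get (finNext i))

/-- The weight of a cycle: the sum of its arc weights. -/
def WeightedDigraph.cycleWeight {V : Type*} (G : WeightedDigraph V) (c : List V) : ℝ :=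
  ∑ i : Fin c.length, G.w (c.get i) (c.get (finNext i))

/-- `G` has a negative cycle. -/
def WeightedDigraph.HasNegCycle {V : Type*} (G : WeightedDigraph V) : Prop :=
  ∃ c : List V, G.IsCycle c ∧ G.cycleWeight c < 0

/-- `x` and `y` are distinct and incomparable. -/
def Incomp {X : Type*} [PartialOrder X] (x y : X) : Prop :=
  x ≠ y ∧ ¬ x < y ∧ ¬ y < x

/-- The weighted digraph `G_{P,k}` associated to the finite poset `X` and the
parameters `k` and `ε`.  The left copy `Sum.inl x` plays the role of `ℓ_x`,
and the right copy `Sum.inr x` plays the role of `r_x`.  Arcs: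
`(ℓ_y, r_x)` of weight `-ε` when `x ≺ y`; `(ℓ_x, r_x)` of weight `k`;
`(r_x, ℓ_y)` of weight `0` when `x, y` are distinct and incomparable;
`(r_x, ℓ_x)` of weight `-1`. -/
def GPk (X : Type*) [PartialOrder X] [DecidableEq X] (k : ℕ) (ε : ℝ) :
    WeightedDigraph (X ⊕ X) where
  Adj u v :=
    match u, v with
    | .inl y, .inr x => x < y ∨ x = y
    | .inr x, .inl y => Incomp x y ∨ x = y
    | _, _ => False
  w u v :=
    match u, v with
    | .inl y, .inr x => if x = y then (k : ℝ) else -ε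
    | .inr x, .inl y => if x = y then -1 else 0
    | _, _ => 0

/-- `L, R` give an interval representation of the poset `X`: each `x` gets the
closed interval `[L x, R x]`, and `x ≺ y` iff the interval of `x` lies
entirely to the left of the interval of `y`. -/
def IsIntervalRep {X : Type*} [PartialOrder X] (L R : X → ℝ) : Prop :=
  (∀ x, L x ≤ R x) ∧ ∀ x y, x < y ↔ R x < L y

/-- The poset `X` has an interval representation with all lengths in `[1, k]`. -/
def HasIntervalRep1k (X : Type*) [PartialOrder X] (k : ℕ) : Prop :=
  ∃ L R : X → ℝ, IsIntervalRep L R ∧ ∀ x, 1 ≤ R x - L x ∧ R x - L x ≤ (k : ℝ)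

/-- `X` contains an induced copy of `2 + 2`: elements `a, b, c, d` whose only
comparabilities are `a ≺ c` and `b ≺ d`. -/
def HasInduced22 (X : Type*) [PartialOrder X] : Prop :=
  ∃ a b c d : X, a < c ∧ b < d ∧ Incomp a b ∧ Incomp a d ∧ Incomp b c ∧ Incomp c d

/-- `X` contains an induced copy of `n + 1`: a chain `a 0 ≺ a 1 ≺ ⋯ ≺ a (n-1)`
together with an element `x` incomparable to every element of the chain. -/
def HasInducedChainPlus1 (X : Type*) [PartialOrder X] (n : ℕ) : Prop :=
  ∃ (a : ℕ → X) (x : X), (∀ i j, i < j → j < n → a i < a j) ∧ ∀ i < n, Incomp x (a i)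


/-!
The endpoints of a `[1,k]`-interval representation form a potential for the integer-weighted
graph `G_{P,k}` with `ε = 0`, strictly so on every precedence arc `(ℓ_y, r_x)`. Hence every
cycle has nonnegative integer weight in that graph, and weight at least `1` if it uses a
precedence arc. Lowering the weight of those arcs from `0` to `-ε` costs at most
`2|X| · ε < 1` in total.
-/

open Finset

lemma finNext_eq_finRotate {n : ℕ} (i : Fin n) : finNext i = finRotate n i := by
  rw [finRotate_apply]
  ext
  simp [finNext, Fin.val_add]

lemma sum_comp_finNext {M : Type*} [AddCommMonoid M] {n : ℕ} (f : Fin n → M) :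
    ∑ i, f (finNext i) = ∑ i, f i := by
  simp_rw [finNext_eq_finRotate]
  exact Equiv.sum_comp _ f

namespace WeightedDigraph

variable {V : Type*} (G : WeightedDigraph V)

lemma cycleWeight_eq_sum_sub (p : V → ℝ) (c : List V) :
    G.cycleWeight c =
      ∑ i, (G.w (c.get i) (c.get (finNext i)) - (p (c.get (finNext i)) - p (c.get i))) := by
  simp only [sum_sub_distrib, sum_comp_finNext fun i => p (c.get i), sub_self, sub_zero]
  rfl

variable {G} {p : V → ℝ} {c : List V}

lemma cycleWeight_nonneg_of_isPotential (hp : G.IsPotential p) (hc : G.IsCycle c) :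
    0 ≤ G.cycleWeight c := by
  rw [G.cycleWeight_eq_sum_sub p]
  exact sum_nonneg fun i _ => sub_nonneg.mpr (hp _ _ (hc.2.2 i))

lemma cycleWeight_pos_of_isPotential (hp : G.IsPotential p) (hc : G.IsCycle c)
    (i : Fin c.length)
    (hi : p (c.get (finNext i)) - p (c.get i) < G.w (c.get i) (c.get (finNext i))) :
    0 < G.cycleWeight c := by
  rw [G.cycleWeight_eq_sum_sub p]
  exact sum_pos' (fun j _ => sub_nonneg.mpr (hp _ _ (hc.2.2 j))) ⟨i, mem_univ i, sub_pos.mpr hi⟩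

end WeightedDigraph

lemma mul_lt_one_of_le_of_lt_one_div {m N : ℕ} {ε : ℝ} (hm : m ≤ N) (hε : ε < 1 / N) :
    m * ε < 1 := by
  rcases le_or_gt ε 0 with hε0 | hε0
  · nlinarith [(Nat.cast_nonneg m : (0 : ℝ) ≤ m)]
  have hN : (0 : ℝ) < N := by
    by_contra! hN
    simp [le_antisymm hN N.cast_nonneg] at hε
    linarith
  calc (m : ℝ) * ε ≤ N * ε := by gcongr
    _ < 1 := by rwa [lt_div_iff₀ hN, mul_comm] at hε

section GPk

variable {X : Type*} [PartialOrder X] [DecidableEq X] {k : ℕ}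

/-- The pairs `(ℓ_y, r_x)` with `x ≠ y`; among arcs of `G_{P,k}` these are the precedence arcs,
the only ones weighted by `ε`. -/
def IsPrecArc : X ⊕ X → X ⊕ X → Prop
  | .inl y, .inr x => x ≠ y
  | _, _ => False

open Classical in
lemma GPk_w_eq (ε : ℝ) (u v : X ⊕ X) :
    (GPk X k ε).w u v = (GPk X k 0).w u v - if IsPrecArc u v then ε else 0 := by
  rcases u with _ | _ <;> rcases v with _ | _ <;> simp only [GPk, IsPrecArc] <;> split_ifs <;>
    simp_all

lemma GPk_zero_cycleWeight_mem_range (c : List (X ⊕ X)) :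
    (GPk X k 0).cycleWeight c ∈ (Int.castRingHom ℝ).range := by
  refine Subring.sum_mem _ fun i _ => ?_
  rcases c.get i with _ | _ <;> rcases c.get (finNext i) with _ | _ <;> simp only [GPk] <;>
    (try split_ifs) <;> simp

open Classical in
lemma GPk_cycleWeight_eq (ε : ℝ) (c : List (X ⊕ X)) :
    (GPk X k ε).cycleWeight c =
      (GPk X k 0).cycleWeight c - #{i | IsPrecArc (c.get i) (c.get (finNext i))} * ε := by
  simp only [WeightedDigraph.cycleWeight, GPk_w_eq ε, sum_sub_distrib, sum_ite, sum_const_zero,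
    add_zero, sum_const, nsmul_eq_mul]

variable {L R : X → ℝ}

lemma isPotential_GPk_zero (hrep : IsIntervalRep L R) (hlen : ∀ x, 1 ≤ R x - L x ∧ R x - L x ≤ (k : ℝ)) :
    (GPk X k 0).IsPotential (Sum.elim L R) := by
  rintro (y | x) (y' | x') hadj
  · exact hadj.elim
  · rcases hadj with hxy | rfl
    · simp [GPk, hxy.ne, ((hrep.2 x' y).mp hxy).le]
    · simp [GPk, (hlen x').2]
  · rcases hadj with ⟨hne, hxy, -⟩ | rfl
    · simp [GPk, hne, not_lt.mp fun h => hxy ((hrep.2 x y').mpr h)]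
    · simp [GPk]
      linarith [(hlen x).1]
  · exact hadj.elim

lemma GPk_zero_w_gt_of_isPrecArc (hrep : IsIntervalRep L R) {u v : X ⊕ X} (hadj : (GPk X k 0).Adj u v)
    (hprec : IsPrecArc u v) : Sum.elim L R v - Sum.elim L R u < (GPk X k 0).w u v := by
  rcases u with y | _ <;> rcases v with _ | x <;> try exact hprec.elim
  have hne : x ≠ y := hprec
  simp [GPk, hne, (hrep.2 x y).mp (hadj.resolve_right hne)]

lemma one_le_GPk_zero_cycleWeight_of_isPrecArc (hrep : IsIntervalRep L R)
    (hlen : ∀ x, 1 ≤ R x - L x ∧ R x - L x ≤ (k : ℝ)) {c : List (X ⊕ X)}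
    (hc : (GPk X k 0).IsCycle c) (i : Fin c.length)
    (hprec : IsPrecArc (c.get i) (c.get (finNext i))) :
    1 ≤ (GPk X k 0).cycleWeight c := by
  have hpos := WeightedDigraph.cycleWeight_pos_of_isPotential (isPotential_GPk_zero hrep hlen) hc i
    (GPk_zero_w_gt_of_isPrecArc hrep (hc.2.2 i) hprec)
  obtain ⟨n, hn⟩ := GPk_zero_cycleWeight_mem_range (k := k) c
  rw [← hn, eq_intCast] at hpos ⊢
  exact_mod_cast (Int.cast_pos.mp hpos : 0 < n)

end GPk

theorem no_negCycle_of_hasIntervalRep1k_general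
    {X : Type*} [Fintype X] [PartialOrder X] [DecidableEq X] (k : ℕ)
    (ε : ℝ) (hε1 : ε < 1 / (2 * Fintype.card X))
    (h : HasIntervalRep1k X k) :
    ¬ (GPk X k ε).HasNegCycle := by
  classical
  rintro ⟨c, hc, hneg⟩
  obtain ⟨L, R, hrep, hlen⟩ := h
  have hc0 : (GPk X k 0).IsCycle c := hc
  rw [GPk_cycleWeight_eq] at hneg
  set m := #{i | IsPrecArc (c.get i) (c.get (finNext i))}
  rcases m.eq_zero_or_pos with hm0 | hmpos
  · rw [hm0, Nat.cast_zero, zero_mul, sub_zero] at hneg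
    exact (WeightedDigraph.cycleWeight_nonneg_of_isPotential (isPotential_GPk_zero hrep hlen)
      hc0).not_gt hneg
  obtain ⟨i, hi⟩ := card_pos.mp hmpos
  have hW0 := one_le_GPk_zero_cycleWeight_of_isPrecArc hrep hlen hc0 i (mem_filter.mp hi).2
  have hmle : m ≤ 2 * Fintype.card X :=
    (card_filter_le _ _).trans (by simpa [Fintype.card_sum, two_mul] using hc.2.1.length_le_card)
  have hmε : m * ε < 1 := mul_lt_one_of_le_of_lt_one_div hmle (by exact_mod_cast hε1)
  linarith

/-- If `P` has a `[1,k]`-interval representation, then `G_{P,k}` has no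
negative cycle. -/
theorem no_negCycle_of_hasIntervalRep1k
    {X : Type*} [Fintype X] [PartialOrder X] [DecidableEq X] (k : ℕ) (hk : 0 < k)
    (ε : ℝ) (hε0 : 0 < ε) (hε1 : ε < 1 / (2 * Fintype.card X))
    (h : HasIntervalRep1k X k) :
    ¬ (GPk X k ε).HasNegCycle :=
  no_negCycle_of_hasIntervalRep1k_general k ε hε1 h
end

section
/- Let P = (X, ≺) be a finite poset, k a positive integer, and ε a real number with 0 < ε < 1/(2|X|). If the weighted digraph G_{P,k} contains no negative cycle, then P has a [1,k]-interval representation. -/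
/-!
A potential `p` of `G_{P,k}` is an interval representation, with `L x = p ℓ_x` and
`R x = p r_x`: the arcs between `ℓ_x` and `r_x` force `1 ≤ R x - L x ≤ k`, the arcs `(ℓ_y, r_x)`
force `R x + ε ≤ L y` when `x ≺ y`, and the arcs `(r_x, ℓ_y)` force `L y ≤ R x` when `x ∥ y`.
When there is no negative cycle, the least weight of a path ending at `v` is a potential
(Bellman–Ford): an optimal path to `u` followed by an arc `(u, v)` is either a path to `v` or
contains a cycle through `v`, of nonnegative weight.
-/

namespace WeightedDigraph

variable {V : Type*} (G : WeightedDigraph V)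

def walkWeight : List V → ℝ
  | a :: b :: t => G.w a b + walkWeight (b :: t)
  | _ => 0

theorem walkWeight_cons_eq_sum (a : V) (t : List V) :
    G.walkWeight (a :: t) = ∑ i : Fin t.length, G.w (a :: t)[i] t[i] := by
  induction t generalizing a with
  | nil => simp [walkWeight]
  | cons b t ih => simp [walkWeight, ih, Fin.sum_univ_succ]

theorem walkWeight_append_cons (l : List V) (v : V) (t : List V) :
    G.walkWeight (l ++ v :: t) = G.walkWeight (l ++ [v]) + G.walkWeight (v :: t) := by
  induction l using List.twoStepInduction with
  | nil => simp [walkWeight]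
  | singleton a => simp [walkWeight]
  | cons_cons a b l _ ih => simp only [List.cons_append, walkWeight] at ih ⊢; rw [ih]; ring

theorem walkWeight_concat {l : List V} {u : V} (hu : l.getLast? = some u) (v : V) :
    G.walkWeight (l ++ [v]) = G.walkWeight l + G.w u v := by
  obtain ⟨l, rfl⟩ := List.getLast?_eq_some_iff.mp hu
  rw [List.append_assoc, List.singleton_append, walkWeight_append_cons]
  simp [walkWeight]

theorem cycleWeight_cons {a u : V} {t : List V} (hu : (a :: t).getLast? = some u) :
    G.cycleWeight (a :: t) = G.walkWeight (a :: t) + G.w u a := by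
  change ∑ i : Fin (t.length + 1), _ = _
  rw [Fin.sum_univ_castSucc, walkWeight_cons_eq_sum, ← List.getLast_of_getLast?_eq_some hu]
  have hmod (i : Fin t.length) : (↑i + 1) % (t.length + 1) = ↑i + 1 := Nat.mod_eq_of_lt (by omega)
  simp [finNext, List.getLast_eq_getElem, hmod]

def IsPathTo (c : List V) (v : V) : Prop :=
  c.Nodup ∧ c.IsChain G.Adj ∧ c.getLast? = some v

variable {G}

theorem IsPathTo.isCycle_cons {a u : V} {t : List V} (h : G.IsPathTo (a :: t) u)
    (hua : G.Adj u a) : G.IsCycle (a :: t) := by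
  obtain ⟨hnd, hc, hu⟩ := h
  refine ⟨List.cons_ne_nil a t, hnd, fun i => ?_⟩
  induction i using Fin.lastCases with
  | last =>
    have hlast := List.getLast_of_getLast?_eq_some hu
    simp only [List.getLast_eq_getElem, List.length_cons, Nat.add_sub_cancel] at hlast
    simpa [finNext, hlast] using hua
  | cast i =>
    have hmod : (↑i + 1) % (a :: t).length = ↑i + 1 := Nat.mod_eq_of_lt (by simp)
    simp only [List.get_eq_getElem, finNext, Fin.val_castSucc, hmod]
    exact List.isChain_iff_getElem.mp hc i (by simp)

theorem IsPathTo.concat {c : List V} {u v : V} (h : G.IsPathTo c u) (huv : G.Adj u v)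
    (hv : v ∉ c) : G.IsPathTo (c ++ [v]) v := by
  obtain ⟨hnd, hc, hu⟩ := h
  refine ⟨List.nodup_append.mpr ⟨hnd, List.nodup_singleton v,
    by simpa using fun a ha => ne_of_mem_of_not_mem ha hv⟩, ?_, List.getLast?_concat⟩
  exact hc.append (List.isChain_singleton v) (by simpa [hu])

theorem IsPathTo.prefix_concat {l t : List V} {u v : V} (h : G.IsPathTo (l ++ v :: t) u) :
    G.IsPathTo (l ++ [v]) v := by
  have hpre : l ++ [v] <+: l ++ v :: t := ⟨t, by simp⟩
  exact ⟨h.1.sublist hpre.sublist, h.2.1.prefix hpre, List.getLast?_concat⟩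

theorem IsPathTo.suffix_cons {l t : List V} {u v : V} (h : G.IsPathTo (l ++ v :: t) u) :
    G.IsPathTo (v :: t) u := by
  have hsuf : v :: t <:+ l ++ v :: t := ⟨l, rfl⟩
  exact ⟨h.1.sublist hsuf.sublist, h.2.1.suffix hsuf, by simpa using h.2.2⟩

variable (G)

noncomputable def minPathWeightTo (v : V) : ℝ :=
  sInf (G.walkWeight '' {c | G.IsPathTo c v})

variable [Finite V]

theorem finite_walkWeight_image_isPathTo (v : V) :
    (G.walkWeight '' {c | G.IsPathTo c v}).Finite := by
  have : Finite {c : List V // c.Nodup} := by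
    have := Fintype.ofFinite V
    infer_instance
  exact ((Set.finite_coe_iff.mp this).subset fun c hc => hc.1).image _

variable {G}

theorem minPathWeightTo_le {c : List V} {v : V} (h : G.IsPathTo c v) :
    G.minPathWeightTo v ≤ G.walkWeight c :=
  csInf_le (G.finite_walkWeight_image_isPathTo v).bddBelow ⟨c, h, rfl⟩

variable (G)

theorem exists_isPathTo_walkWeight_eq (v : V) :
    ∃ c, G.IsPathTo c v ∧ G.walkWeight c = G.minPathWeightTo v :=
  have hne : (G.walkWeight '' {c | G.IsPathTo c v}).Nonempty :=
    ⟨_, [v], ⟨List.nodup_singleton v, List.isChain_singleton v, rfl⟩, rfl⟩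
  hne.csInf_mem (G.finite_walkWeight_image_isPathTo v)

theorem isPotential_minPathWeightTo (h : ¬ G.HasNegCycle) : G.IsPotential G.minPathWeightTo := by
  intro u v huv
  obtain ⟨c, hc, hcw⟩ := G.exists_isPathTo_walkWeight_eq u
  by_cases hv : v ∈ c
  · obtain ⟨l, t, rfl⟩ := List.append_of_mem hv
    have hcycle : 0 ≤ G.cycleWeight (v :: t) :=
      not_lt.mp fun hneg => h ⟨v :: t, hc.suffix_cons.isCycle_cons huv, hneg⟩
    rw [G.cycleWeight_cons hc.suffix_cons.2.2] at hcycle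
    rw [walkWeight_append_cons] at hcw
    linarith [minPathWeightTo_le hc.prefix_concat]
  · have := minPathWeightTo_le (hc.concat huv hv)
    rw [G.walkWeight_concat hc.2.2] at this
    linarith

end WeightedDigraph

namespace GPk

variable {X : Type*} [PartialOrder X] [DecidableEq X] {k : ℕ} {ε : ℝ} {p : X ⊕ X → ℝ}

theorem one_le_sub_of_isPotential (hp : (GPk X k ε).IsPotential p) (x : X) :
    1 ≤ p (.inr x) - p (.inl x) := by
  have := hp (.inr x) (.inl x) (Or.inr rfl)
  simp only [GPk, if_true] at this
  linarith

theorem sub_le_of_isPotential (hp : (GPk X k ε).IsPotential p) (x : X) :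
    p (.inr x) - p (.inl x) ≤ k := by
  simpa [GPk] using hp (.inl x) (.inr x) (Or.inr rfl)

theorem add_le_of_isPotential_of_lt (hp : (GPk X k ε).IsPotential p) {x y : X} (hxy : x < y) :
    p (.inr x) + ε ≤ p (.inl y) := by
  have := hp (.inl y) (.inr x) (Or.inl hxy)
  simp only [GPk, if_neg hxy.ne] at this
  linarith

theorem le_of_isPotential_of_incomp (hp : (GPk X k ε).IsPotential p) {x y : X}
    (hxy : Incomp x y) : p (.inl y) ≤ p (.inr x) := by
  have := hp (.inr x) (.inl y) (Or.inl hxy)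
  simp only [GPk, if_neg hxy.1] at this
  linarith

theorem isIntervalRep_of_isPotential (hp : (GPk X k ε).IsPotential p) (hε : 0 < ε) :
    IsIntervalRep (fun x => p (.inl x)) (fun x => p (.inr x)) := by
  have hlen := one_le_sub_of_isPotential hp
  refine ⟨fun x => by linarith [hlen x], fun x y => ⟨fun hxy => ?_, fun hRL => ?_⟩⟩
  · linarith [add_le_of_isPotential_of_lt hp hxy]
  · by_contra hnxy
    rcases eq_or_ne x y with rfl | hne
    · linarith [hlen x]
    by_cases hyx : y < x
    · linarith [hlen x, hlen y, add_le_of_isPotential_of_lt hp hyx]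
    · linarith [le_of_isPotential_of_incomp hp ⟨hne, hnxy, hyx⟩]

end GPk

theorem hasIntervalRep1k_of_no_negCycle_general
    {X : Type*} [Fintype X] [PartialOrder X] [DecidableEq X] (k : ℕ)
    (ε : ℝ) (hε0 : 0 < ε)
    (h : ¬ (GPk X k ε).HasNegCycle) :
    HasIntervalRep1k X k := by
  have hp := (GPk X k ε).isPotential_minPathWeightTo h
  exact ⟨_, _, GPk.isIntervalRep_of_isPotential hp hε0,
    fun x => ⟨GPk.one_le_sub_of_isPotential hp x, GPk.sub_le_of_isPotential hp x⟩⟩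

/-- If `G_{P,k}` has no negative cycle, then `P` has a `[1,k]`-interval
representation. -/
theorem hasIntervalRep1k_of_no_negCycle
    {X : Type*} [Fintype X] [PartialOrder X] [DecidableEq X] (k : ℕ) (hk : 0 < k)
    (ε : ℝ) (hε0 : 0 < ε) (hε1 : ε < 1 / (2 * Fintype.card X))
    (h : ¬ (GPk X k ε).HasNegCycle) :
    HasIntervalRep1k X k :=
  hasIntervalRep1k_of_no_negCycle_general k ε hε0 h
end

section
/- Let P = (X, ≺) be a finite poset, k a positive integer, and ε a real number with 0 < ε < 1/(2|X|). If a potential function p exists on the weighted digraph G_{P,k}, then assigning to each x ∈ X the interval I_x = [p(ℓ_x), p(r_x)] yields a [1,k]-interval representation of P. -/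
theorem IsIntervalRep.of_lt_of_incomp {X : Type*} [PartialOrder X] {L R : X → ℝ}
    (hLR : ∀ x, L x ≤ R x) (hlt : ∀ x y, x < y → R x < L y)
    (hinc : ∀ x y, Incomp x y → L y ≤ R x) : IsIntervalRep L R := by
  refine ⟨hLR, fun x y => ⟨hlt x y, fun hRL => ?_⟩⟩
  by_contra hxy
  by_cases heq : x = y
  · subst heq
    linarith [hLR x]
  by_cases hyx : y < x
  · linarith [hlt y x hyx, hLR x, hLR y]
  · linarith [hinc x y ⟨heq, hxy, hyx⟩]

namespace GPk

variable {X : Type*} [PartialOrder X] [DecidableEq X] {k : ℕ} {ε : ℝ} {p : X ⊕ X → ℝ}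

theorem sub_le_neg_of_isPotential_of_lt (hp : (GPk X k ε).IsPotential p) {x y : X}
    (hxy : x < y) : p (.inr x) - p (.inl y) ≤ -ε := by
  simpa [GPk, hxy.ne] using hp (.inl y) (.inr x) (Or.inl hxy)

end GPk

theorem potential_gives_intervalRep1k_general
    {X : Type*} [PartialOrder X] [DecidableEq X] (k : ℕ)
    (ε : ℝ) (hε0 : 0 < ε)
    (p : X ⊕ X → ℝ) (hp : (GPk X k ε).IsPotential p) :
    IsIntervalRep (fun x : X => p (Sum.inl x)) (fun x : X => p (Sum.inr x)) ∧
      ∀ x : X, 1 ≤ p (Sum.inr x) - p (Sum.inl x) ∧ p (Sum.inr x) - p (Sum.inl x) ≤ (k : ℝ) := by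
  have hlength x := GPk.one_le_sub_of_isPotential hp x
  refine ⟨.of_lt_of_incomp (fun x => by linarith [hlength x]) (fun x y hxy => ?_)
    (fun x y hxy => GPk.le_of_isPotential_of_incomp hp hxy),
    fun x => ⟨hlength x, GPk.sub_le_of_isPotential hp x⟩⟩
  linarith [GPk.sub_le_neg_of_isPotential_of_lt hp hxy]

/-- If `p` is a potential function on `G_{P,k}`, then the intervals
`[p ℓ_x, p r_x]` form a `[1,k]`-interval representation of `P`. -/
theorem potential_gives_intervalRep1k
    {X : Type*} [Fintype X] [PartialOrder X] [DecidableEq X] (k : ℕ) (hk : 0 < k)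
    (ε : ℝ) (hε0 : 0 < ε) (hε1 : ε < 1 / (2 * Fintype.card X))
    (p : X ⊕ X → ℝ) (hp : (GPk X k ε).IsPotential p) :
    IsIntervalRep (fun x : X => p (Sum.inl x)) (fun x : X => p (Sum.inr x)) ∧
      ∀ x : X, 1 ≤ p (Sum.inr x) - p (Sum.inl x) ∧ p (Sum.inr x) - p (Sum.inl x) ≤ (k : ℝ) :=
  potential_gives_intervalRep1k_general k ε hε0 p hp
end

section
/- Let P = (X, ≺) be a finite poset, k a positive integer, and ε a real number with 0 < ε < 1/(2|X|). If P contains four elements a, b, x, y inducing a 2+2 (i.e., a ≺ x and b ≺ y are the only comparabilities among them), then ℓ_x → r_a → ℓ_y → r_b → ℓ_x is a cycle in the weighted digraph G_{P,k} of total weight −2ε; in particular G_{P,k} contains a negative cycle. -/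
namespace WeightedDigraph

variable {V : Type*} (G : WeightedDigraph V) (v₀ v₁ v₂ v₃ : V)

theorem cycleWeight_four :
    G.cycleWeight [v₀, v₁, v₂, v₃] = G.w v₀ v₁ + G.w v₁ v₂ + G.w v₂ v₃ + G.w v₃ v₀ := by
  simp [cycleWeight, Fin.sum_univ_succ, finNext, add_assoc]

theorem isCycle_four (hnodup : [v₀, v₁, v₂, v₃].Nodup) (h₀₁ : G.Adj v₀ v₁) (h₁₂ : G.Adj v₁ v₂)
    (h₂₃ : G.Adj v₂ v₃) (h₃₀ : G.Adj v₃ v₀) : G.IsCycle [v₀, v₁, v₂, v₃] := by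
  refine ⟨List.cons_ne_nil _ _, hnodup, fun i => ?_⟩
  fin_cases i
  exacts [h₀₁, h₁₂, h₂₃, by simpa [finNext] using h₃₀]

end WeightedDigraph

section GPk

variable {X : Type*} [PartialOrder X] [DecidableEq X] (k : ℕ) (ε : ℝ) {u v : X}

theorem GPk_adj_inl_inr_of_lt (h : u < v) : (GPk X k ε).Adj (.inl v) (.inr u) :=
  Or.inl h

theorem GPk_w_inl_inr_of_lt (h : u < v) : (GPk X k ε).w (.inl v) (.inr u) = -ε :=
  if_neg h.ne

theorem GPk_adj_inr_inl_of_incomp (h : Incomp u v) : (GPk X k ε).Adj (.inr u) (.inl v) :=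
  Or.inl h

theorem GPk_w_inr_inl_of_incomp (h : Incomp u v) : (GPk X k ε).w (.inr u) (.inl v) = 0 :=
  if_neg h.1

end GPk

theorem induced22_gives_negCycle_general
    {X : Type*} [PartialOrder X] [DecidableEq X] (k : ℕ)
    (ε : ℝ) (hε0 : 0 < ε)
    (a b x y : X) (hax : a < x) (hby : b < y)
    (hab : Incomp a b) (hay : Incomp a y) (hbx : Incomp b x) (hxy : Incomp x y) :
    (GPk X k ε).IsCycle [Sum.inl x, Sum.inr a, Sum.inl y, Sum.inr b] ∧
      (GPk X k ε).cycleWeight [Sum.inl x, Sum.inr a, Sum.inl y, Sum.inr b] = -(2 * ε) ∧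
      (GPk X k ε).HasNegCycle := by
  have hcycle : (GPk X k ε).IsCycle [.inl x, .inr a, .inl y, .inr b] :=
    (GPk X k ε).isCycle_four _ _ _ _ (by simp [hxy.1, hab.1])
      (GPk_adj_inl_inr_of_lt k ε hax) (GPk_adj_inr_inl_of_incomp k ε hay)
      (GPk_adj_inl_inr_of_lt k ε hby) (GPk_adj_inr_inl_of_incomp k ε hbx)
  have hweight : (GPk X k ε).cycleWeight [.inl x, .inr a, .inl y, .inr b] = -(2 * ε) := by
    rw [WeightedDigraph.cycleWeight_four, GPk_w_inl_inr_of_lt k ε hax,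
      GPk_w_inr_inl_of_incomp k ε hay, GPk_w_inl_inr_of_lt k ε hby,
      GPk_w_inr_inl_of_incomp k ε hbx]
    ring
  exact ⟨hcycle, hweight, _, hcycle, by linarith⟩

/-- An induced `2+2` on elements `a, b, x, y` (with `a ≺ x`, `b ≺ y` the only
comparabilities) yields the cycle `ℓ_x → r_a → ℓ_y → r_b → ℓ_x` in `G_{P,k}`,
of total weight `-2ε`; in particular `G_{P,k}` has a negative cycle. -/
theorem induced22_gives_negCycle
    {X : Type*} [Fintype X] [PartialOrder X] [DecidableEq X] (k : ℕ) (hk : 0 < k)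
    (ε : ℝ) (hε0 : 0 < ε) (hε1 : ε < 1 / (2 * Fintype.card X))
    (a b x y : X) (hax : a < x) (hby : b < y)
    (hab : Incomp a b) (hay : Incomp a y) (hbx : Incomp b x) (hxy : Incomp x y) :
    (GPk X k ε).IsCycle [Sum.inl x, Sum.inr a, Sum.inl y, Sum.inr b] ∧
      (GPk X k ε).cycleWeight [Sum.inl x, Sum.inr a, Sum.inl y, Sum.inr b] = -(2 * ε) ∧
      (GPk X k ε).HasNegCycle :=
  induced22_gives_negCycle_general k ε hε0 a b x y hax hby hab hay hbx hxy
end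

section
/- Let P = (X, ≺) be a finite poset, k a positive integer, and ε a real number with 0 < ε < 1/(2|X|). If C is a negative cycle in the weighted digraph G_{P,k} having the minimum number of arcs among all negative cycles, then the number of arcs of C of weight −1 is at least k times the number of arcs of C of weight k. -/
/-!
Every arc of `G_{P,k}` has weight `k`, `-1`, `0` or `-ε`. A cycle visits at most `2|X|` vertices,
so its arcs of weight `0` or `-ε` contribute more than `-2|X|ε > -1`. A negative cycle with `a`
arcs of weight `k` and `b` arcs of weight `-1` thus has `k a - b - 1 < 0`, i.e. `k a ≤ b`.
-/

open Finset

theorem GPk_w_eq_or {X : Type*} [PartialOrder X] [DecidableEq X] (k : ℕ) (ε : ℝ)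
    (u v : X ⊕ X) :
    (GPk X k ε).w u v = k ∨ (GPk X k ε).w u v = -1 ∨ (GPk X k ε).w u v = 0 ∨
      (GPk X k ε).w u v = -ε := by
  rcases u with y | x <;> rcases v with x' | y' <;> simp only [GPk] <;> (try split_ifs) <;> simp

section Counting

variable {ι : Type*} [Fintype ι] (f : ι → ℝ) (k : ℕ) {δ : ℝ}

theorem mul_card_sub_card_sub_le_sum (hδ : 0 ≤ δ)
    (hf : ∀ i, f i = k ∨ f i = -1 ∨ -δ ≤ f i) :
    (k * Nat.card {i // f i = k} : ℝ) - Nat.card {i // f i = -1} - δ * Fintype.card ι ≤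
      ∑ i, f i := by
  classical
  have hk : (k : ℝ) ≠ -1 := by have := k.cast_nonneg (α := ℝ); linarith
  have hpointwise : ∀ i, (k * (if f i = k then 1 else 0) - (if f i = -1 then 1 else 0) - δ : ℝ)
      ≤ f i := by
    intro i
    rcases hf i with h | h | h
    · simp [h, hk, hδ]
    · simp [h, hk.symm, hδ]
    · split_ifs <;> linarith
  calc (k * Nat.card {i // f i = k} : ℝ) - Nat.card {i // f i = -1} - δ * Fintype.card ι
      = ∑ i, (k * (if f i = k then 1 else 0) - (if f i = -1 then 1 else 0) - δ : ℝ) := by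
        simp only [sum_sub_distrib, ← mul_sum, sum_boole, sum_const, card_univ,
          Nat.card_eq_fintype_card, Fintype.card_subtype, nsmul_eq_mul]
        ring
    _ ≤ ∑ i, f i := sum_le_sum fun i _ => hpointwise i

theorem mul_card_le_card_of_sum_neg (hδ : 0 ≤ δ) (hδι : δ * Fintype.card ι < 1)
    (hf : ∀ i, f i = k ∨ f i = -1 ∨ -δ ≤ f i) (hsum : ∑ i, f i < 0) :
    k * Nat.card {i // f i = k} ≤ Nat.card {i // f i = -1} := by
  have := mul_card_sub_card_sub_le_sum f k hδ hf
  have hlt : ((k * Nat.card {i // f i = k} : ℕ) : ℝ) < (Nat.card {i // f i = -1} + 1 : ℕ) := by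
    push_cast
    linarith
  exact Nat.lt_succ_iff.mp (by exact_mod_cast hlt)

end Counting

theorem List.Nodup.mul_length_lt_one {X : Type*} [Fintype X] {c : List (X ⊕ X)} (hc : c.Nodup)
    {ε : ℝ} (hε0 : 0 ≤ ε) (hε1 : ε < 1 / (2 * Fintype.card X)) :
    ε * c.length < 1 := by
  have hlen : (c.length : ℝ) ≤ 2 * Fintype.card X := by
    have := hc.length_le_card
    rw [Fintype.card_sum] at this
    exact_mod_cast this.trans (by omega)
  have hε2 : ε * (2 * Fintype.card X) < 1 := by
    rcases (Fintype.card X).eq_zero_or_pos with h | h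
    · simp [h]
    · exact (lt_div_iff₀ (by positivity)).mp hε1
  calc ε * c.length ≤ ε * (2 * Fintype.card X) := mul_le_mul_of_nonneg_left hlen hε0
    _ < 1 := hε2

theorem minimal_negCycle_count_weightK_general
    {X : Type*} [Fintype X] [PartialOrder X] [DecidableEq X] (k : ℕ)
    (ε : ℝ) (hε0 : 0 < ε) (hε1 : ε < 1 / (2 * Fintype.card X))
    (c : List (X ⊕ X)) (hc : (GPk X k ε).IsCycle c)
    (hneg : (GPk X k ε).cycleWeight c < 0) :
    k * Nat.card {i : Fin c.length // (GPk X k ε).w (c.get i) (c.get (finNext i)) = (k : ℝ)} ≤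
      Nat.card {i : Fin c.length // (GPk X k ε).w (c.get i) (c.get (finNext i)) = -1} := by
  have hεc : ε * Fintype.card (Fin c.length) < 1 := by
    simpa using hc.2.1.mul_length_lt_one hε0.le hε1
  refine mul_card_le_card_of_sum_neg _ k hε0.le hεc (fun i => ?_) hneg
  rcases GPk_w_eq_or k ε (c.get i) (c.get (finNext i)) with h | h | h | h
  · exact Or.inl h
  · exact Or.inr (Or.inl h)
  · exact Or.inr (Or.inr (by rw [h]; linarith))
  · exact Or.inr (Or.inr h.ge)

/-- In a negative cycle of `G_{P,k}` with the minimum number of arcs, there are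
at least `k` arcs of weight `-1` for every arc of weight `k`. -/
theorem minimal_negCycle_count_weightK
    {X : Type*} [Fintype X] [PartialOrder X] [DecidableEq X] (k : ℕ) (hk : 0 < k)
    (ε : ℝ) (hε0 : 0 < ε) (hε1 : ε < 1 / (2 * Fintype.card X))
    (c : List (X ⊕ X)) (hc : (GPk X k ε).IsCycle c)
    (hneg : (GPk X k ε).cycleWeight c < 0)
    (hmin : ∀ c' : List (X ⊕ X), (GPk X k ε).IsCycle c' →
      (GPk X k ε).cycleWeight c' < 0 → c.length ≤ c'.length) :
    k * Nat.card {i : Fin c.length // (GPk X k ε).w (c.get i) (c.get (finNext i)) = (k : ℝ)} ≤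
      Nat.card {i : Fin c.length // (GPk X k ε).w (c.get i) (c.get (finNext i)) = -1} :=
  minimal_negCycle_count_weightK_general k ε hε0 hε1 c hc hneg
end

section
/- Let P = (X, ≺) be a finite poset, k a positive integer, and ε a real number with 0 < ε < 1/(2|X|). Suppose P contains no induced 2+2. If C is a negative cycle in the weighted digraph G_{P,k} having the minimum number of arcs among all negative cycles, then C does not contain three consecutive arcs whose weights are −ε, 0, −ε (in that order). -/
/-!
Write the three arcs as `ℓ_d → r_a → ℓ_e → r_b`, so that `a < d`, `a ∥ e` and `b < e`. Without
an induced `2+2` this forces `b < d`, so `ℓ_d → r_b` is an arc of weight `-ε`, and replacing the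
three arcs by it gives a cycle with two arcs fewer whose weight is larger by exactly `ε`. That
cycle is still negative: the weight of a cycle is an integer minus `ε` times its number of `-ε`
arcs, and this last term is below `1` because a cycle has at most `2|X|` arcs; hence a negative
cycle with two `-ε` arcs weighs at most `-2ε`.
-/

namespace WeightedDigraph

variable {V : Type*}

def cycleArcs (c : List V) : List (V × V) := c.zip (c.rotate 1)

lemma cycleArcs_cons (u : V) (l : List V) : cycleArcs (u :: l) = (u :: l).zip (l ++ [u]) := by
  simp [cycleArcs]

lemma cycleArcs_rotate (c : List V) (n : ℕ) : cycleArcs (c.rotate n) = (cycleArcs c).rotate n := by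
  rw [cycleArcs, cycleArcs, List.zip, List.zipWith_rotate_distrib _ _ _ _ (c.length_rotate 1).symm,
    List.rotate_rotate, List.rotate_rotate, Nat.add_comm]

lemma ofFn_eq_cycleArcs (c : List V) :
    List.ofFn (fun i : Fin c.length => (c.get i, c.get (finNext i))) = cycleArcs c := by
  refine List.ext_getElem (by simp [cycleArcs]) fun _ _ _ => ?_
  simp [cycleArcs, finNext, List.getElem_rotate]

variable (G : WeightedDigraph V)

lemma isCycle_iff_cycleArcs {c : List V} :
    G.IsCycle c ↔ c ≠ [] ∧ c.Nodup ∧ ∀ p ∈ cycleArcs c, G.Adj p.1 p.2 := by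
  simp [IsCycle, ← ofFn_eq_cycleArcs]

lemma cycleWeight_eq_sum_cycleArcs (c : List V) :
    G.cycleWeight c = ((cycleArcs c).map fun p => G.w p.1 p.2).sum := by
  rw [cycleWeight, ← ofFn_eq_cycleArcs, List.map_ofFn, List.sum_ofFn]
  rfl

variable {G}

lemma IsCycle.rotate {c : List V} (hc : G.IsCycle c) (n : ℕ) : G.IsCycle (c.rotate n) := by
  rw [isCycle_iff_cycleArcs] at hc ⊢
  obtain ⟨hne, hnd, harc⟩ := hc
  refine ⟨by simpa using hne, List.nodup_rotate.mpr hnd, fun p hp => harc p ?_⟩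
  rwa [cycleArcs_rotate, List.mem_rotate] at hp

lemma cycleWeight_rotate (c : List V) (n : ℕ) : G.cycleWeight (c.rotate n) = G.cycleWeight c := by
  simp only [cycleWeight_eq_sum_cycleArcs, cycleArcs_rotate, List.map_rotate]
  exact ((List.rotate_perm _ n).sum_eq)

lemma IsCycle.shortcut {u v w x : V} {t : List V} (hc : G.IsCycle (u :: v :: w :: x :: t))
    (hux : G.Adj u x) : G.IsCycle (u :: x :: t) := by
  rw [isCycle_iff_cycleArcs] at hc ⊢
  obtain ⟨-, hnd, harc⟩ := hc
  refine ⟨List.cons_ne_nil _ _, hnd.sublist (by simp), ?_⟩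
  simp only [cycleArcs_cons, List.cons_append, List.zip_cons_cons, List.mem_cons,
    forall_eq_or_imp] at harc ⊢
  exact ⟨hux, harc.2.2.2⟩

lemma cycleWeight_shortcut (u v w x : V) (t : List V) :
    G.cycleWeight (u :: x :: t) =
      G.cycleWeight (u :: v :: w :: x :: t) - (G.w u v + G.w v w + G.w w x) + G.w u x := by
  simp only [cycleWeight_eq_sum_cycleArcs, cycleArcs_cons, List.cons_append, List.zip_cons_cons,
    List.map_cons, List.sum_cons]
  ring

end WeightedDigraph

lemma val_finNext_iterate {n : ℕ} (i : Fin n) (j : ℕ) : (finNext^[j] i).val = (i.val + j) % n := by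
  induction j with
  | zero => simp [Nat.mod_eq_of_lt i.isLt]
  | succ j ih =>
    rw [Function.iterate_succ_apply']
    change ((finNext^[j] i).val + 1) % n = _
    rw [ih, Nat.mod_add_mod, Nat.add_assoc]

lemma finNext_iterate_of_eq_length {n j : ℕ} (i : Fin n) (hj : j = n) : finNext^[j] i = i :=
  Fin.ext <| by rw [val_finNext_iterate, hj, Nat.add_mod_right, Nat.mod_eq_of_lt i.isLt]

namespace List

variable {V : Type*}

lemma getElem_rotate_eq_get_finNext_iterate (c : List V) (i : Fin c.length) (j : ℕ)
    (hj : j < (c.rotate i).length) : (c.rotate i)[j] = c.get (finNext^[j] i) := by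
  simp [List.getElem_rotate, val_finNext_iterate, Nat.add_comm]

lemma four_le_length_of_get_finNext_ne {c : List V} (i : Fin c.length)
    (h₁ : c.get (finNext i) ≠ c.get i) (h₂ : c.get (finNext (finNext i)) ≠ c.get i)
    (h₃ : c.get (finNext (finNext (finNext i))) ≠ c.get i) : 4 ≤ c.length := by
  by_contra! hlt
  obtain h | h | h : 1 = c.length ∨ 2 = c.length ∨ 3 = c.length := by have := i.pos; omega
  · exact h₁ (congrArg c.get (finNext_iterate_of_eq_length i h))
  · exact h₂ (congrArg c.get (finNext_iterate_of_eq_length i h))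
  · exact h₃ (congrArg c.get (finNext_iterate_of_eq_length i h))

lemma exists_rotate_eq_cons {c : List V} (i : Fin c.length) (h : 4 ≤ c.length) :
    ∃ t, c.rotate i = c.get i :: c.get (finNext i) :: c.get (finNext (finNext i)) ::
      c.get (finNext (finNext (finNext i))) :: t := by
  have hget := getElem_rotate_eq_get_finNext_iterate c i
  have hlen := c.length_rotate i
  rcases hl : c.rotate i with _ | ⟨u, _ | ⟨v, _ | ⟨w, _ | ⟨x, t⟩⟩⟩⟩ <;> rw [hl] at hget hlen
  all_goals try (simp at hlen; omega)
  refine ⟨t, ?_⟩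
  simp only [List.cons.injEq, and_true]
  exact ⟨hget 0 (by simp), hget 1 (by simp), hget 2 (by simp), hget 3 (by simp)⟩

end List

open Finset in
lemma Finset.sum_le_neg_mul_card_of_eq_neg_or_int {ι : Type*} [Fintype ι] {f : ι → ℝ} {ε : ℝ}
    (hε : 0 ≤ ε) (hcard : ε * Fintype.card ι < 1) (hf : ∀ j, f j = -ε ∨ ∃ z : ℤ, f j = z)
    (hneg : ∑ j, f j < 0) : ∑ j, f j ≤ -ε * #{j | f j = -ε} := by
  classical
  set m := #{j | f j = -ε}
  have hint : ∑ j with f j ≠ -ε, f j ∈ (Int.castAddHom ℝ).range :=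
    AddSubgroup.sum_mem _ fun j hj => by
      obtain ⟨z, hz⟩ := (hf j).resolve_left (mem_filter.mp hj).2
      exact ⟨z, hz.symm⟩
  obtain ⟨z, hz⟩ := hint
  have hsplit : ∑ j, f j = z - ε * m := by
    rw [← sum_filter_add_sum_filter_not univ (f · = -ε),
      sum_congr rfl fun j hj => (mem_filter.mp hj).2, sum_const, nsmul_eq_mul, ← hz]
    simp only [Int.coe_castAddHom]
    ring
  have hm : ε * m < 1 :=
    lt_of_le_of_lt (mul_le_mul_of_nonneg_left (by exact_mod_cast card_le_univ _) hε) hcard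
  have hz0 : (z : ℝ) ≤ 0 := by
    have : z < 1 := by exact_mod_cast (show (z : ℝ) < 1 by linarith)
    exact_mod_cast Int.lt_add_one_iff.mp this
  linarith

lemma lt_of_lt_of_incomp_of_not_hasInduced22 {X : Type*} [PartialOrder X] (h22 : ¬ HasInduced22 X)
    {a b c d : X} (had : a < d) (hbc : b < c) (hac : Incomp a c) : b < d := by
  by_contra hbd
  refine h22 ⟨a, b, d, c, had, hbc, ⟨?_, ?_, ?_⟩, hac, ⟨?_, hbd, ?_⟩, ⟨?_, ?_, ?_⟩⟩
  · rintro rfl; exact hac.2.1 hbc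
  · intro hab; exact hac.2.1 (hab.trans hbc)
  · intro hba; exact hbd (hba.trans had)
  · rintro rfl; exact hac.2.1 (had.trans hbc)
  · intro hdb; exact hac.2.1 (had.trans (hdb.trans hbc))
  · rintro rfl; exact hac.2.1 had
  · intro hdc; exact hac.2.1 (had.trans hdc)
  · intro hcd; exact hbd (hbc.trans hcd)

namespace GPk

variable {X : Type*} [PartialOrder X] [DecidableEq X] {k : ℕ} {ε : ℝ}

lemma exists_lt_of_w_eq_neg_eps (hε0 : 0 < ε) (hε1 : ε < 1) {u v : X ⊕ X}
    (huv : (GPk X k ε).Adj u v) (hw : (GPk X k ε).w u v = -ε) :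
    ∃ x y, x < y ∧ u = .inl y ∧ v = .inr x := by
  rcases u with y | x <;> rcases v with y' | x' <;> simp only [GPk] at huv hw
  · refine ⟨x', y, huv.resolve_right fun h => ?_, rfl, rfl⟩
    rw [if_pos h] at hw
    linarith [(Nat.cast_nonneg k : (0 : ℝ) ≤ k)]
  · split_ifs at hw <;> linarith

lemma exists_incomp_of_w_inr_eq_zero {x : X} {v : X ⊕ X} (hxv : (GPk X k ε).Adj (.inr x) v)
    (hw : (GPk X k ε).w (.inr x) v = 0) : ∃ y, Incomp x y ∧ v = .inl y := by
  rcases v with y | x' <;> simp only [GPk] at hxv hw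
  refine ⟨y, hxv.resolve_right fun h => ?_, rfl⟩
  rw [if_pos h] at hw
  norm_num at hw

lemma w_eq_neg_eps_or_int (u v : X ⊕ X) :
    (GPk X k ε).w u v = -ε ∨ ∃ z : ℤ, (GPk X k ε).w u v = z := by
  rcases u with y | x <;> rcases v with y' | x' <;> simp only [GPk]
  · exact .inr ⟨0, by simp⟩
  · split_ifs
    exacts [.inr ⟨k, by simp⟩, .inl rfl]
  · split_ifs
    exacts [.inr ⟨-1, by simp⟩, .inr ⟨0, by simp⟩]
  · exact .inr ⟨0, by simp⟩

lemma exists_of_w_eq_neg_eps_zero_neg_eps (hε0 : 0 < ε) (hε1 : ε < 1) {u₁ u₂ u₃ u₄ : X ⊕ X}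
    (h₁₂ : (GPk X k ε).Adj u₁ u₂) (h₂₃ : (GPk X k ε).Adj u₂ u₃) (h₃₄ : (GPk X k ε).Adj u₃ u₄)
    (hw₁₂ : (GPk X k ε).w u₁ u₂ = -ε) (hw₂₃ : (GPk X k ε).w u₂ u₃ = 0)
    (hw₃₄ : (GPk X k ε).w u₃ u₄ = -ε) :
    ∃ a b d e, a < d ∧ Incomp a e ∧ b < e ∧
      u₁ = .inl d ∧ u₂ = .inr a ∧ u₃ = .inl e ∧ u₄ = .inr b := by
  obtain ⟨a, d, had, rfl, rfl⟩ := exists_lt_of_w_eq_neg_eps hε0 hε1 h₁₂ hw₁₂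
  obtain ⟨e, hae, rfl⟩ := exists_incomp_of_w_inr_eq_zero h₂₃ hw₂₃
  obtain ⟨b, e', hbe, he, rfl⟩ := exists_lt_of_w_eq_neg_eps hε0 hε1 h₃₄ hw₃₄
  obtain rfl := Sum.inl_injective he
  exact ⟨a, b, d, e, had, hae, hbe, rfl, rfl, rfl, rfl⟩

lemma cycleWeight_shortcut {a b d e : X} (had : a < d) (hae : Incomp a e) (hbe : b < e)
    (hbd : b < d) (t : List (X ⊕ X)) :
    (GPk X k ε).cycleWeight (.inl d :: .inr b :: t) =
      (GPk X k ε).cycleWeight (.inl d :: .inr a :: .inl e :: .inr b :: t) + ε := by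
  rw [WeightedDigraph.cycleWeight_shortcut _ (.inr a) (.inl e)]
  simp only [GPk, if_neg had.ne, if_neg hae.1, if_neg hbe.ne, if_neg hbd.ne]
  ring

open Finset in
lemma cycleWeight_le_neg_two_mul [Fintype X] (hε0 : 0 ≤ ε) (hεX : ε * (2 * Fintype.card X) < 1)
    {c : List (X ⊕ X)} (hc : c.Nodup) (hneg : (GPk X k ε).cycleWeight c < 0)
    {i j : Fin c.length} (hij : i ≠ j) (hi : (GPk X k ε).w (c.get i) (c.get (finNext i)) = -ε)
    (hj : (GPk X k ε).w (c.get j) (c.get (finNext j)) = -ε) :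
    (GPk X k ε).cycleWeight c ≤ -(2 * ε) := by
  have hlen : (c.length : ℝ) ≤ 2 * Fintype.card X := by
    have := hc.length_le_card
    rw [Fintype.card_sum] at this
    exact_mod_cast (by omega : c.length ≤ 2 * Fintype.card X)
  have hW := Finset.sum_le_neg_mul_card_of_eq_neg_or_int hε0
    (by rw [Fintype.card_fin]; exact (mul_le_mul_of_nonneg_left hlen hε0).trans_lt hεX)
    (fun j => w_eq_neg_eps_or_int _ _) hneg
  have htwo : (2 : ℝ) ≤ #{j | (GPk X k ε).w (c.get j) (c.get (finNext j)) = -ε} := by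
    refine mod_cast (card_pair hij).symm.trans_le (card_le_card ?_)
    simp only [insert_subset_iff, singleton_subset_iff, mem_filter, mem_univ, true_and]
    exact ⟨hi, hj⟩
  exact hW.trans (by nlinarith)

end GPk

theorem minimal_negCycle_no_eps_zero_eps_general
    {X : Type*} [Fintype X] [PartialOrder X] [DecidableEq X] (k : ℕ)
    (ε : ℝ) (hε0 : 0 < ε) (hε1 : ε < 1 / (2 * Fintype.card X))
    (h22 : ¬ HasInduced22 X)
    (c : List (X ⊕ X)) (hc : (GPk X k ε).IsCycle c)
    (hneg : (GPk X k ε).cycleWeight c < 0)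
    (hmin : ∀ c' : List (X ⊕ X), (GPk X k ε).IsCycle c' →
      (GPk X k ε).cycleWeight c' < 0 → c.length ≤ c'.length) :
    ¬ ∃ i : Fin c.length,
        (GPk X k ε).w (c.get i) (c.get (finNext i)) = -ε ∧
        (GPk X k ε).w (c.get (finNext i)) (c.get (finNext (finNext i))) = 0 ∧
        (GPk X k ε).w (c.get (finNext (finNext i)))
          (c.get (finNext (finNext (finNext i)))) = -ε := by
  rintro ⟨i, h₁, h₂, h₃⟩
  have hX : 0 < Fintype.card X := Fintype.card_pos_iff.mpr ⟨(c.get i).elim id id⟩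
  have hεX : ε * (2 * Fintype.card X) < 1 := by rwa [lt_div_iff₀ (by positivity)] at hε1
  have hε_one : ε < 1 := (le_mul_of_one_le_right hε0.le (by norm_cast; omega)).trans_lt hεX
  obtain ⟨a, b, d, e, had, hae, hbe, hd, ha, he, hb⟩ :=
    GPk.exists_of_w_eq_neg_eps_zero_neg_eps hε0 hε_one (hc.2.2 _) (hc.2.2 _) (hc.2.2 _) h₁ h₂ h₃
  have hbd : b < d := lt_of_lt_of_incomp_of_not_hasInduced22 h22 had hbe hae
  have hde : d ≠ e := fun h => hae.2.1 (h ▸ had)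
  have hW : (GPk X k ε).cycleWeight c ≤ -(2 * ε) :=
    GPk.cycleWeight_le_neg_two_mul hε0.le hεX hc.2.1 hneg
      (fun h => hde (Sum.inl_injective (hd.symm.trans ((congrArg c.get h).trans he)))) h₁ h₃
  obtain ⟨t, hrot⟩ := List.exists_rotate_eq_cons i <| List.four_le_length_of_get_finNext_ne i
    (by rw [ha, hd]; exact Sum.inr_ne_inl)
    (by rw [he, hd]; exact fun h => hde (Sum.inl_injective h).symm)
    (by rw [hb, hd]; exact Sum.inr_ne_inl)
  rw [ha, he, hb, hd] at hrot
  have hWshort := GPk.cycleWeight_shortcut (k := k) (ε := ε) had hae hbe hbd t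
  rw [← hrot, WeightedDigraph.cycleWeight_rotate] at hWshort
  have hlen : c.length = (Sum.inl d :: Sum.inr b :: t).length + 2 := by
    simpa using congrArg List.length hrot
  have := hmin _ ((hrot ▸ hc.rotate i).shortcut (Or.inl hbd)) (by linarith)
  omega

/-- If `P` has no induced `2+2`, then a negative cycle of `G_{P,k}` with the
minimum number of arcs contains no three consecutive arcs of weights
`-ε, 0, -ε` (in that order). -/
theorem minimal_negCycle_no_eps_zero_eps
    {X : Type*} [Fintype X] [PartialOrder X] [DecidableEq X] (k : ℕ) (hk : 0 < k)
    (ε : ℝ) (hε0 : 0 < ε) (hε1 : ε < 1 / (2 * Fintype.card X))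
    (h22 : ¬ HasInduced22 X)
    (c : List (X ⊕ X)) (hc : (GPk X k ε).IsCycle c)
    (hneg : (GPk X k ε).cycleWeight c < 0)
    (hmin : ∀ c' : List (X ⊕ X), (GPk X k ε).IsCycle c' →
      (GPk X k ε).cycleWeight c' < 0 → c.length ≤ c'.length) :
    ¬ ∃ i : Fin c.length,
        (GPk X k ε).w (c.get i) (c.get (finNext i)) = -ε ∧
        (GPk X k ε).w (c.get (finNext i)) (c.get (finNext (finNext i))) = 0 ∧
        (GPk X k ε).w (c.get (finNext (finNext i)))
          (c.get (finNext (finNext (finNext i)))) = -ε :=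
  minimal_negCycle_no_eps_zero_eps_general k ε hε0 hε1 h22 c hc hneg hmin
end
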